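/- arXiv:1608.00803 — 5 statements merged into one kernel-verified Lean document; each statement's English description precedes it below -/
import Mathlib

section
/- Dedekind's lemma: Let O be an order in an étale ℚ-algebra A with maximal order O_A and conductor f. The map sending an integral O_A-ideal ã prime to f to ã ∩ O is a bijection from the set of integral O_A-ideals prime to f onto the set of integral O-ideals prime to f, with inverse a ↦ a·O_A. -/
/-!
Writing `1 = j + c` with `j` in the ideal and `c` in the conductor `𝔣`, every `x` splits as
`x * j + x * c`, where `x * c` lies in `𝔣` and hence in the smaller ring. This is what makes
extension and contraction mutually inverse on ideals coprime to `𝔣`.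
-/

namespace RingHom

variable {R S F : Type*} [CommRing R] [CommRing S] [FunLike F R S] [RingHomClass F R S]

def conductor (f : F) : Ideal S where
  carrier := {s | ∀ t : S, s * t ∈ Set.range f}
  zero_mem' t := ⟨0, by rw [map_zero, zero_mul]⟩
  add_mem' {s s'} hs hs' t := by
    obtain ⟨r, hr⟩ := hs t
    obtain ⟨r', hr'⟩ := hs' t
    exact ⟨r + r', by rw [map_add, hr, hr', add_mul]⟩
  smul_mem' u s hs t := by
    simpa only [smul_eq_mul, mul_assoc, mul_left_comm u] using hs (u * t)

variable {f : F}

theorem mem_range_of_mem_conductor {s : S} (hs : s ∈ conductor f) : s ∈ Set.range f := by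
  simpa only [mul_one] using hs 1

theorem exists_mem_comap_conductor_one_sub_mem_comap {J : Ideal S}
    (hJ : J ⊔ conductor f = ⊤) : ∃ r ∈ (conductor f).comap f, 1 - r ∈ J.comap f := by
  obtain ⟨j, hj, c, hc, hjc⟩ := Submodule.mem_sup.mp ((Ideal.eq_top_iff_one _).mp hJ)
  obtain ⟨r, rfl⟩ := mem_range_of_mem_conductor hc
  refine ⟨r, hc, ?_⟩
  rwa [Ideal.mem_comap, map_sub, map_one, ← hjc, add_sub_cancel_right]

theorem comap_sup_conductor_eq_top {J : Ideal S} (hJ : J ⊔ conductor f = ⊤) :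
    J.comap f ⊔ (conductor f).comap f = ⊤ := by
  obtain ⟨r, hr, hr'⟩ := exists_mem_comap_conductor_one_sub_mem_comap hJ
  rw [Ideal.eq_top_iff_one, ← sub_add_cancel 1 r]
  exact Submodule.add_mem_sup hr' hr

theorem map_comap_eq_of_sup_conductor_eq_top {J : Ideal S} (hJ : J ⊔ conductor f = ⊤) :
    (J.comap f).map f = J := by
  refine le_antisymm Ideal.map_comap_le fun x hx => ?_
  obtain ⟨r, hr, hr'⟩ := exists_mem_comap_conductor_one_sub_mem_comap hJ
  obtain ⟨u, hu⟩ := hr x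
  have hu_mem : u ∈ J.comap f := by
    rw [Ideal.mem_comap, hu]
    exact J.mul_mem_left _ hx
  rw [← mul_one x, ← map_one f, ← sub_add_cancel 1 r, map_add, mul_add, mul_comm x (f r), ← hu]
  exact add_mem (Ideal.mul_mem_left _ x (Ideal.mem_map_of_mem f hr'))
    (Ideal.mem_map_of_mem f hu_mem)

theorem map_sup_conductor_eq_top {a : Ideal R} (ha : a ⊔ (conductor f).comap f = ⊤) :
    a.map f ⊔ conductor f = ⊤ := by
  rw [eq_top_iff, ← Ideal.map_top f, ← ha, Ideal.map_sup]
  exact sup_le_sup_left Ideal.map_comap_le _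

theorem mul_mem_image_of_mem_map_of_mem_conductor {a : Ideal R} {s : S} (hs : s ∈ a.map f)
    {c : S} (hc : c ∈ conductor f) : s * c ∈ f '' a := by
  induction hs using Submodule.span_induction generalizing c with
  | mem x hx =>
    obtain ⟨x, hx, rfl⟩ := hx
    obtain ⟨r, rfl⟩ := mem_range_of_mem_conductor hc
    exact ⟨x * r, a.mul_mem_right r hx, map_mul f x r⟩
  | zero => exact ⟨0, a.zero_mem, by rw [map_zero, zero_mul]⟩
  | add x y _ _ hx hy =>
    obtain ⟨w, hw, hwx⟩ := hx hc
    obtain ⟨w', hw', hwy⟩ := hy hc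
    exact ⟨w + w', a.add_mem hw hw', by rw [map_add, hwx, hwy, add_mul]⟩
  | smul t x _ hx =>
    obtain ⟨w, hw, hwx⟩ := hx ((conductor f).mul_mem_left t hc)
    exact ⟨w, hw, by rw [hwx, smul_eq_mul, mul_left_comm, mul_assoc]⟩

theorem comap_map_eq_of_sup_conductor_eq_top (hf : Function.Injective f) {a : Ideal R}
    (ha : a ⊔ (conductor f).comap f = ⊤) : (a.map f).comap f = a := by
  refine le_antisymm (fun x hx => ?_) Ideal.le_comap_map
  obtain ⟨b, hb, c, hc, hbc⟩ := Submodule.mem_sup.mp ((Ideal.eq_top_iff_one _).mp ha)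
  obtain ⟨w, hw, hwx⟩ := mul_mem_image_of_mem_map_of_mem_conductor hx hc
  have hxc : x * c = w := hf (by rw [map_mul, hwx])
  rw [← mul_one x, ← hbc, mul_add, hxc]
  exact add_mem (a.mul_mem_left x hb) hw

end RingHom

namespace Subalgebra

variable {R A : Type*} [CommRing R] [CommRing A] [Algebra R A] {O O' : Subalgebra R A}

theorem mem_conductor_inclusion_iff (h : O ≤ O') {x : O'} :
    x ∈ RingHom.conductor (inclusion h) ↔ ∀ y : O', (x : A) * y ∈ O :=
  forall_congr' fun y =>
    ⟨fun ⟨r, hr⟩ => by rw [← MulMemClass.coe_mul, ← hr]; exact r.2, fun hxy => ⟨⟨_, hxy⟩, rfl⟩⟩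

theorem span_setOf_mul_mem_eq_conductor_inclusion (h : O ≤ O') :
    Ideal.span {x : O' | ∀ y : O', (x : A) * y ∈ O} = RingHom.conductor (inclusion h) := by
  rw [← Ideal.span_eq (RingHom.conductor (inclusion h))]
  congr 1
  ext x
  exact (mem_conductor_inclusion_iff h).symm

theorem span_setOf_mul_mem_eq_comap_conductor_inclusion (h : O ≤ O') :
    Ideal.span {x : O | ∀ y : O', (x : A) * y ∈ O} =
      (RingHom.conductor (inclusion h)).comap (inclusion h) := by
  rw [← Ideal.span_eq ((RingHom.conductor (inclusion h)).comap (inclusion h))]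
  congr 1
  ext x
  exact (mem_conductor_inclusion_iff h (x := inclusion h x)).symm

end Subalgebra

open RingHom Subalgebra in
theorem dedekind_conductor_bijection_general
    (A : Type*) [CommRing A]
    (O : Subalgebra ℤ A) (hO : O ≤ integralClosure ℤ A) :
    (∀ J : Ideal (integralClosure ℤ A),
      J ⊔ Ideal.span {x : integralClosure ℤ A |
          ∀ y : integralClosure ℤ A, (x : A) * (y : A) ∈ O} = ⊤ →
      (Ideal.comap (Subalgebra.inclusion hO) J ⊔
          Ideal.span {x : O | ∀ y : integralClosure ℤ A, (x : A) * (y : A) ∈ O}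
        = ⊤ ∧
       Ideal.map (Subalgebra.inclusion hO)
          (Ideal.comap (Subalgebra.inclusion hO) J) = J)) ∧
    (∀ a : Ideal O,
      a ⊔ Ideal.span {x : O | ∀ y : integralClosure ℤ A, (x : A) * (y : A) ∈ O}
        = ⊤ →
      (Ideal.map (Subalgebra.inclusion hO) a ⊔
          Ideal.span {x : integralClosure ℤ A |
            ∀ y : integralClosure ℤ A, (x : A) * (y : A) ∈ O} = ⊤ ∧
       Ideal.comap (Subalgebra.inclusion hO)
          (Ideal.map (Subalgebra.inclusion hO) a) = a)) := by
  rw [span_setOf_mul_mem_eq_conductor_inclusion hO,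
    span_setOf_mul_mem_eq_comap_conductor_inclusion hO]
  exact ⟨fun J hJ => ⟨comap_sup_conductor_eq_top hJ, map_comap_eq_of_sup_conductor_eq_top hJ⟩,
    fun a ha => ⟨map_sup_conductor_eq_top ha,
      comap_map_eq_of_sup_conductor_eq_top (inclusion_injective hO) ha⟩⟩

/-- Dedekind's lemma: let `O` be an order in an étale `ℚ`-algebra `A`
(a finite-dimensional reduced commutative `ℚ`-algebra) with maximal order
`O_A = integralClosure ℤ A` and conductor `f = {γ ∈ A : γ·O_A ⊆ O}`.
The map `J ↦ J ∩ O` is a bijection from the set of integral `O_A`-ideals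
prime to `f` onto the set of integral `O`-ideals prime to `f`, with inverse
`a ↦ a·O_A`.  (Here `J ∩ O` is `Ideal.comap` and `a·O_A` is `Ideal.map`
along the inclusion `O → O_A`, and "prime to `f`" means `ideal + f = (1)`.) -/
theorem dedekind_conductor_bijection
    (A : Type*) [CommRing A] [Algebra ℚ A] [IsReduced A] [FiniteDimensional ℚ A]
    (O : Subalgebra ℤ A) (hO : O ≤ integralClosure ℤ A)
    (hfull : Submodule.span ℚ (O : Set A) = ⊤)
    (hfg : (Subalgebra.toSubmodule O).FG) :
    (∀ J : Ideal (integralClosure ℤ A),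
      J ⊔ Ideal.span {x : integralClosure ℤ A |
          ∀ y : integralClosure ℤ A, (x : A) * (y : A) ∈ O} = ⊤ →
      (Ideal.comap (Subalgebra.inclusion hO) J ⊔
          Ideal.span {x : O | ∀ y : integralClosure ℤ A, (x : A) * (y : A) ∈ O}
        = ⊤ ∧
       Ideal.map (Subalgebra.inclusion hO)
          (Ideal.comap (Subalgebra.inclusion hO) J) = J)) ∧
    (∀ a : Ideal O,
      a ⊔ Ideal.span {x : O | ∀ y : integralClosure ℤ A, (x : A) * (y : A) ∈ O}
        = ⊤ →
      (Ideal.map (Subalgebra.inclusion hO) a ⊔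
          Ideal.span {x : integralClosure ℤ A |
            ∀ y : integralClosure ℤ A, (x : A) * (y : A) ∈ O} = ⊤ ∧
       Ideal.comap (Subalgebra.inclusion hO)
          (Ideal.map (Subalgebra.inclusion hO) a) = a)) :=
  dedekind_conductor_bijection_general A O hO
end

section
/- Modular law for quadratic orders: Let k be a quadratic étale ℚ-algebra with maximal order O_k, let O_{k,m} = ℤ·1 + m·O_k, let a be an integral ideal of O_{k,m}, and let c be the smallest positive integer in a + m·O_k. Then c divides m, and setting m' = m/c one has a + m·O_k = c·O_{k,m'}, and c⁻¹·a·O_{k,m'} is an integral O_{k,m'}-ideal prime to the conductor m'·O_k of O_{k,m'}. -/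
/-- The maximal order `O_k = integralClosure ℤ k`, viewed as a `ℤ`-submodule. -/
noncomputable def maxOrder (K : Type*) [CommRing K] : Submodule ℤ K :=
  Subalgebra.toSubmodule (integralClosure ℤ K)

/-- The order `O_{k,m} = ℤ·1 + m·O_k` of conductor `m`. -/
noncomputable def quadOrder (K : Type*) [CommRing K] (m : ℕ) : Submodule ℤ K :=
  Submodule.span ℤ {(1 : K)} ⊔ Submodule.span ℤ {(m : K)} * maxOrder K

/-! The integers lying in `b = a + m·O_k` form the ideal `cℤ`, by minimality of `c`; in
particular `c ∣ m`. Since `a ⊆ ℤ·1 + m·O_k` and `m·O_k ⊆ b`, the modular law for submodules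
gives `b = (ℤ·1 ∩ b) + m·O_k = ℤ·c + m·O_k = c·O_{k,m/c}`. Dividing by `c` then yields
`c⁻¹·a + (m/c)·O_k = O_{k,m/c}`, which makes `c⁻¹·a·O_{k,m/c}` integral and prime to the
conductor. -/

open Submodule

theorem Submodule.span_singleton_mul_span_singleton {R A : Type*} [CommSemiring R] [Semiring A]
    [Algebra R A] (x y : A) : span R {x} * span R {y} = span R {x * y} := by
  rw [span_mul_span, Set.singleton_mul_singleton]

theorem Submodule.dvd_of_intCast_mem_of_minimal {R : Type*} [Ring R] {b : Submodule ℤ R} {c : ℕ}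
    (hc : 0 < c) (hcb : (c : R) ∈ b) (hmin : ∀ c' : ℕ, 0 < c' → (c' : R) ∈ b → c ≤ c')
    {n : ℤ} (hn : (n : R) ∈ b) : (c : ℤ) ∣ n := by
  have hrem : ((n % c : ℤ) : R) ∈ b := by
    rw [Int.emod_def, mul_comm, Int.cast_sub, Int.cast_mul, Int.cast_natCast]
    exact sub_mem hn (by simpa [zsmul_eq_mul] using b.smul_mem (n / c) hcb)
  obtain ⟨r, hr⟩ := Int.eq_ofNat_of_zero_le (Int.emod_nonneg n (by omega : (c : ℤ) ≠ 0))
  have hrc : (r : ℤ) < c := hr ▸ Int.emod_lt_of_pos n (by omega)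
  rw [hr, Int.cast_natCast] at hrem
  have hr0 : r = 0 := by
    by_contra hr0
    exact absurd (hmin r (Nat.pos_of_ne_zero hr0) hrem) (by omega)
  exact Int.dvd_of_emod_eq_zero (by rw [hr, hr0]; rfl)

section QuadOrder

variable (K : Type*) [CommRing K]

def IsIntegralIdealPrimeToConductor (n : ℕ) (I : Submodule ℤ K) : Prop :=
  I ≤ quadOrder K n ∧ quadOrder K n * I ≤ I ∧
    I ⊔ span ℤ {(n : K)} * maxOrder K = quadOrder K n

theorem maxOrder_mul_self : maxOrder K * maxOrder K = maxOrder K :=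
  (Subalgebra.isIdempotentElem_toSubmodule _).eq

theorem one_le_quadOrder (n : ℕ) : 1 ≤ quadOrder K n :=
  one_le.mpr (mem_sup_left (mem_span_singleton_self 1))

theorem natCast_mem_span_mul_maxOrder (n : ℕ) : (n : K) ∈ span ℤ {(n : K)} * maxOrder K := by
  simpa using mul_mem_mul (mem_span_singleton_self (n : K))
    (show (1 : K) ∈ maxOrder K from one_mem (integralClosure ℤ K))

theorem span_natCast_le_one (n : ℕ) : span ℤ {(n : K)} ≤ 1 := by
  rw [one_eq_span, span_le, Set.singleton_subset_iff]
  exact mem_span_singleton.mpr ⟨n, by simp⟩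

theorem quadOrder_mul_self_le (n : ℕ) : quadOrder K n * quadOrder K n ≤ quadOrder K n := by
  set C := span ℤ {(n : K)} * maxOrder K
  have hCC : C * C ≤ C :=
    calc C * C = span ℤ {(n : K)} * (span ℤ {(n : K)} * (maxOrder K * maxOrder K)) := by ring
      _ = span ℤ {(n : K)} * C := by rw [maxOrder_mul_self]
      _ ≤ 1 * C := mul_le_mul' (span_natCast_le_one K n) le_rfl
      _ = C := one_mul C
  rw [quadOrder, ← one_eq_span, Submodule.sup_mul, Submodule.mul_sup, Submodule.mul_sup, one_mul,
    one_mul, mul_one]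
  exact sup_le (sup_le le_sup_left le_sup_right) (sup_le le_sup_right (hCC.trans le_sup_right))

theorem span_natCast_mul_quadOrder (c n : ℕ) :
    span ℤ {(c : K)} * quadOrder K n
      = span ℤ {(c : K)} ⊔ span ℤ {((c * n : ℕ) : K)} * maxOrder K := by
  rw [quadOrder, Submodule.mul_sup, span_singleton_mul_span_singleton, mul_one, ← mul_assoc,
    span_singleton_mul_span_singleton, Nat.cast_mul]

variable {K}

/-- By the modular law, `(ℤ·1 + m·O_k) ∩ b = (ℤ·1 ∩ b) + m·O_k` for `b = a + m·O_k`. -/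
theorem sup_conductor_eq_span_sup {a : Submodule ℤ K} {m c : ℕ} (hle : a ≤ quadOrder K m)
    (hcb : (c : K) ∈ a ⊔ span ℤ {(m : K)} * maxOrder K)
    (hdvd : ∀ n : ℤ, (n : K) ∈ a ⊔ span ℤ {(m : K)} * maxOrder K → (c : ℤ) ∣ n) :
    a ⊔ span ℤ {(m : K)} * maxOrder K
      = span ℤ {(c : K)} ⊔ span ℤ {(m : K)} * maxOrder K := by
  set C := span ℤ {(m : K)} * maxOrder K
  have hint : span ℤ {(1 : K)} ⊓ (a ⊔ C) ≤ span ℤ {(c : K)} := by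
    rintro _ ⟨hx, hxb⟩
    obtain ⟨t, rfl⟩ := mem_span_singleton.mp hx
    rw [zsmul_one] at hxb ⊢
    obtain ⟨s, rfl⟩ := hdvd t hxb
    exact mem_span_singleton.mpr ⟨s, by push_cast; rw [zsmul_eq_mul, mul_comm]⟩
  have ha : a ≤ span ℤ {(c : K)} ⊔ C :=
    calc a ≤ (C ⊔ span ℤ {(1 : K)}) ⊓ (a ⊔ C) :=
          le_inf (hle.trans_eq (sup_comm _ _)) le_sup_left
      _ = C ⊔ span ℤ {(1 : K)} ⊓ (a ⊔ C) := sup_inf_assoc_of_le _ le_sup_right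
      _ ≤ C ⊔ span ℤ {(c : K)} := sup_le_sup_left hint C
      _ = span ℤ {(c : K)} ⊔ C := sup_comm _ _
  exact le_antisymm (sup_le ha le_sup_right)
    (sup_le (span_le.mpr (Set.singleton_subset_iff.mpr hcb)) le_sup_right)

theorem isIntegralIdealPrimeToConductor_span_mul {a : Submodule ℤ K} {c n : ℕ} {u : K}
    (huc : u * c = 1)
    (hb : a ⊔ span ℤ {((c * n : ℕ) : K)} * maxOrder K = span ℤ {(c : K)} * quadOrder K n) :
    IsIntegralIdealPrimeToConductor K n (span ℤ {u} * (a * quadOrder K n)) := by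
  have hdiv : span ℤ {u} * a ⊔ span ℤ {(n : K)} * maxOrder K = quadOrder K n :=
    calc span ℤ {u} * a ⊔ span ℤ {(n : K)} * maxOrder K
        = span ℤ {u} * (a ⊔ span ℤ {((c * n : ℕ) : K)} * maxOrder K) := by
          rw [Submodule.mul_sup, ← mul_assoc, span_singleton_mul_span_singleton, Nat.cast_mul,
            ← mul_assoc, huc, one_mul]
      _ = span ℤ {u} * span ℤ {(c : K)} * quadOrder K n := by rw [hb, mul_assoc]
      _ = quadOrder K n := by
          rw [span_singleton_mul_span_singleton, huc, ← one_eq_span, one_mul]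
  rw [IsIntegralIdealPrimeToConductor, ← mul_assoc]
  have hle : span ℤ {u} * a * quadOrder K n ≤ quadOrder K n :=
    (mul_le_mul' (hdiv ▸ le_sup_left) le_rfl).trans (quadOrder_mul_self_le K n)
  refine ⟨hle, ?_, le_antisymm (sup_le hle le_sup_right) ?_⟩
  · calc quadOrder K n * (span ℤ {u} * a * quadOrder K n)
        = span ℤ {u} * a * (quadOrder K n * quadOrder K n) := by ring
      _ ≤ span ℤ {u} * a * quadOrder K n := mul_le_mul' le_rfl (quadOrder_mul_self_le K n)
  · conv_lhs => rw [← hdiv]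
    exact sup_le_sup_right (le_mul_of_one_le_right' (one_le_quadOrder K n)) _

end QuadOrder

theorem quad_order_modular_law_general
    (K : Type*) [CommRing K] [Algebra ℚ K]
    (m : ℕ)
    (a : Submodule ℤ K) (hle : a ≤ quadOrder K m)
    (c : ℕ) (hc : 0 < c)
    (hmem : ((c : K)) ∈ a ⊔ Submodule.span ℤ {(m : K)} * maxOrder K)
    (hmin : ∀ c' : ℕ, 0 < c' →
      ((c' : K)) ∈ a ⊔ Submodule.span ℤ {(m : K)} * maxOrder K → c ≤ c') :
    c ∣ m ∧
    a ⊔ Submodule.span ℤ {(m : K)} * maxOrder K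
      = Submodule.span ℤ {(c : K)} * quadOrder K (m / c) ∧
    (Submodule.span ℤ {algebraMap ℚ K ((c : ℚ)⁻¹)} * (a * quadOrder K (m / c))
        ≤ quadOrder K (m / c) ∧
      quadOrder K (m / c) *
          (Submodule.span ℤ {algebraMap ℚ K ((c : ℚ)⁻¹)} *
            (a * quadOrder K (m / c)))
        ≤ Submodule.span ℤ {algebraMap ℚ K ((c : ℚ)⁻¹)} *
            (a * quadOrder K (m / c)) ∧
      Submodule.span ℤ {algebraMap ℚ K ((c : ℚ)⁻¹)} * (a * quadOrder K (m / c))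
          ⊔ Submodule.span ℤ {((m / c : ℕ) : K)} * maxOrder K
        = quadOrder K (m / c)) := by
  have hdvd : ∀ n : ℤ, (n : K) ∈ a ⊔ span ℤ {(m : K)} * maxOrder K → (c : ℤ) ∣ n :=
    fun _ ↦ dvd_of_intCast_mem_of_minimal hc hmem hmin
  have hcm : c ∣ m := Int.natCast_dvd_natCast.mp <|
    hdvd m (by rw [Int.cast_natCast]; exact mem_sup_right (natCast_mem_span_mul_maxOrder K m))
  have hb : a ⊔ span ℤ {(m : K)} * maxOrder K = span ℤ {(c : K)} * quadOrder K (m / c) := by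
    rw [sup_conductor_eq_span_sup hle hmem hdvd, span_natCast_mul_quadOrder,
      Nat.mul_div_cancel' hcm]
  have huc : algebraMap ℚ K ((c : ℚ)⁻¹) * c = 1 := by
    rw [← map_natCast (algebraMap ℚ K), ← map_mul, inv_mul_cancel₀ (by positivity), map_one]
  refine ⟨hcm, hb, isIntegralIdealPrimeToConductor_span_mul huc ?_⟩
  rwa [Nat.mul_div_cancel' hcm]

/-- Modular law for quadratic orders: let `k` be a quadratic étale `ℚ`-algebra
(a reduced `ℚ`-algebra of dimension 2), `O_{k,m} = ℤ·1 + m·O_k`, let `a` be an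
integral ideal of `O_{k,m}`, and let `c` be the smallest positive integer with
`c·1 ∈ a + m·O_k`.  Then `c ∣ m`, and with `m' = m/c` one has
`a + m·O_k = c·O_{k,m'}`, and `c⁻¹·a·O_{k,m'}` is an integral
`O_{k,m'}`-ideal prime to the conductor `m'·O_k` of `O_{k,m'}`. -/
theorem quad_order_modular_law
    (K : Type*) [CommRing K] [Algebra ℚ K] [IsReduced K]
    (hrank : Module.finrank ℚ K = 2)
    (m : ℕ) (hm : 0 < m)
    (a : Submodule ℤ K) (hle : a ≤ quadOrder K m)
    (hideal : quadOrder K m * a ≤ a)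
    (c : ℕ) (hc : 0 < c)
    (hmem : ((c : K)) ∈ a ⊔ Submodule.span ℤ {(m : K)} * maxOrder K)
    (hmin : ∀ c' : ℕ, 0 < c' →
      ((c' : K)) ∈ a ⊔ Submodule.span ℤ {(m : K)} * maxOrder K → c ≤ c') :
    c ∣ m ∧
    a ⊔ Submodule.span ℤ {(m : K)} * maxOrder K
      = Submodule.span ℤ {(c : K)} * quadOrder K (m / c) ∧
    (Submodule.span ℤ {algebraMap ℚ K ((c : ℚ)⁻¹)} * (a * quadOrder K (m / c))
        ≤ quadOrder K (m / c) ∧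
      quadOrder K (m / c) *
          (Submodule.span ℤ {algebraMap ℚ K ((c : ℚ)⁻¹)} *
            (a * quadOrder K (m / c)))
        ≤ Submodule.span ℤ {algebraMap ℚ K ((c : ℚ)⁻¹)} *
            (a * quadOrder K (m / c)) ∧
      Submodule.span ℤ {algebraMap ℚ K ((c : ℚ)⁻¹)} * (a * quadOrder K (m / c))
          ⊔ Submodule.span ℤ {((m / c : ℕ) : K)} * maxOrder K
        = quadOrder K (m / c)) :=
  quad_order_modular_law_general K m a hle c hc hmem hmin
end

section
/- For m a positive integer, the ideal class group of the order O_{ℚ²,m} = ℤ·(1,1) + m·(ℤ × ℤ) in ℚ × ℚ is isomorphic to (ℤ/mℤ)* / {±1}, via the map sending the class of the ideal a_t = ℤ·(1,t) + ℤ·(0,m) (for t prime to m) to ±t mod m. -/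
/-- `a` is an invertible fractional ideal of the order `O`. -/
def IsInvertibleIdeal {K : Type*} [CommRing K] (O a : Submodule ℤ K) : Prop :=
  O * a = a ∧ ∃ b : Submodule ℤ K, O * b = b ∧ a * b = O

/-- The ideal `a_t = ℤ·(1,t) + ℤ·(0,m)` of `O_{ℚ²,m}`. -/
noncomputable def aIdeal (m : ℕ) (t : ℤ) : Submodule ℤ (ℚ × ℚ) :=
  Submodule.span ℤ {((1 : ℚ), (t : ℚ))} ⊔ Submodule.span ℤ {((0 : ℚ), (m : ℚ))}

namespace Submodule

theorem isPrincipal_of_le_span_singleton {R M : Type*} [CommRing R] [IsPrincipalIdealRing R]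
    [AddCommGroup M] [Module R M] {c : M} {N : Submodule R M} (h : N ≤ span R {c}) :
    N.IsPrincipal := by
  set f := LinearMap.toSpanSingleton R M c
  have hN : (N.comap f).map f = N := by
    rw [map_comap_eq, LinearMap.range_toSpanSingleton, inf_eq_right.mpr h]
  exact hN ▸ (IsPrincipalIdealRing.principal (N.comap f)).map f

theorem exists_eq_span_singleton_of_mul_eq_one {R K : Type*} [CommRing R]
    [IsPrincipalIdealRing R] [Field K] [Algebra R K] {I J : Submodule R K} (h : I * J = 1) :
    ∃ α : K, α ≠ 0 ∧ I = span R {α} := by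
  have h1 : (1 : K) ∈ I * J := h ▸ one_le.mp le_rfl
  have hI : I ≠ ⊥ := fun hI ↦ by simp [hI] at h1
  have hJ : J ≠ ⊥ := fun hJ ↦ by simp [hJ] at h1
  obtain ⟨y, hy, hy0⟩ := exists_mem_ne_zero_of_ne_bot hJ
  have hle : I ≤ span R {y⁻¹} := fun x hx ↦ by
    obtain ⟨r, hr⟩ := mem_one.mp (h ▸ mul_mem_mul hx hy)
    exact mem_span_singleton.mpr ⟨r, by rw [Algebra.smul_def, hr, mul_inv_cancel_right₀ hy0]⟩
  obtain ⟨α, rfl⟩ := (isPrincipal_of_le_span_singleton hle).principal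
  exact ⟨α, fun hα ↦ hI (by rw [hα, span_singleton_eq_bot.mpr rfl]), rfl⟩

theorem map_span_singleton_mul {R A B : Type*} [CommSemiring R] [Semiring A] [Algebra R A]
    [Semiring B] [Algebra R B] (f : A →ₐ[R] B) (ρ : A) (L : Submodule R A) :
    (span R {ρ} * L).map f.toLinearMap = span R {f ρ} * L.map f.toLinearMap := by
  rw [Submodule.map_mul, map_span, Set.image_singleton]
  rfl

theorem map_eq_one_iff {R M A : Type*} [CommSemiring R] [AddCommMonoid M] [Module R M]
    [Semiring A] [Algebra R A] {f : M →ₗ[R] A} {L : Submodule R M} :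
    L.map f = 1 ↔ (∀ z ∈ L, ∃ r : R, algebraMap R A r = f z) ∧ ∃ z ∈ L, f z = 1 := by
  rw [le_antisymm_iff, one_le, map_le_iff_le_comap]
  refine and_congr ⟨fun h z hz ↦ mem_one.mp (h hz), fun h z hz ↦ mem_one.mpr (h z hz)⟩ ?_
  simp only [mem_map]

end Submodule

namespace SplitQuadraticOrder

open Submodule

theorem mem_maxOrder {z : ℚ × ℚ} :
    z ∈ maxOrder (ℚ × ℚ) ↔ ∃ x y : ℤ, z = ((x : ℚ), (y : ℚ)) := by
  change IsIntegral ℤ z ↔ _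
  rw [IsIntegral.pair_iff, IsIntegrallyClosed.isIntegral_iff, IsIntegrallyClosed.isIntegral_iff]
  constructor
  · rintro ⟨⟨x, hx⟩, ⟨y, hy⟩⟩
    exact ⟨x, y, by ext <;> simp [← hx, ← hy]⟩
  · rintro ⟨x, y, rfl⟩
    exact ⟨⟨x, by simp⟩, ⟨y, by simp⟩⟩

theorem mem_aIdeal {m : ℕ} {t : ℤ} {z : ℚ × ℚ} :
    z ∈ aIdeal m t ↔ ∃ x y : ℤ, z = ((x : ℚ), (y : ℚ)) ∧ (y : ZMod m) = t * x := by
  rw [aIdeal, ← span_union, Set.singleton_union, mem_span_pair]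
  constructor
  · rintro ⟨a, b, rfl⟩
    exact ⟨a, a * t + b * m, by ext <;> simp, by simp [mul_comm]⟩
  · rintro ⟨x, y, rfl, hxy⟩
    obtain ⟨k, hk⟩ :=
      (ZMod.intCast_eq_intCast_iff_dvd_sub (t * x) y m).mp (by push_cast; exact hxy.symm)
    have hy : y = t * x + m * k := by linear_combination hk
    exact ⟨x, k, by ext <;> simp [hy, mul_comm]⟩

theorem mk_mem_aIdeal_iff {m : ℕ} {t x y : ℤ} :
    ((x : ℚ), (y : ℚ)) ∈ aIdeal m t ↔ (y : ZMod m) = t * x := by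
  simp [mem_aIdeal]

theorem aIdeal_le_iff {m : ℕ} {t : ℤ} {N : Submodule ℤ (ℚ × ℚ)} :
    aIdeal m t ≤ N ↔ ((1 : ℚ), (t : ℚ)) ∈ N ∧ ((0 : ℚ), (m : ℚ)) ∈ N := by
  rw [aIdeal, sup_le_iff, span_singleton_le_iff_mem, span_singleton_le_iff_mem]

theorem aIdeal_one_eq_quadOrder (m : ℕ) : aIdeal m 1 = quadOrder (ℚ × ℚ) m := by
  apply le_antisymm
  · refine aIdeal_le_iff.mpr ⟨mem_sup_left ?_, mem_sup_right ?_⟩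
    · rw [Int.cast_one, Prod.mk_one_one]
      exact mem_span_singleton_self 1
    · have : ((0 : ℚ), (m : ℚ)) = (m : ℚ × ℚ) * ((0 : ℚ), (1 : ℚ)) := by ext <;> simp
      rw [this]
      exact mul_mem_mul (mem_span_singleton_self _) (mem_maxOrder.mpr ⟨0, 1, by simp⟩)
  · refine sup_le ?_ (mul_le.mpr fun w hw z hz ↦ ?_)
    · rw [span_singleton_le_iff_mem, ← Prod.mk_one_one, ← Int.cast_one (R := ℚ),
        mk_mem_aIdeal_iff, Int.cast_one, mul_one]
    · obtain ⟨k, rfl⟩ := mem_span_singleton.mp hw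
      obtain ⟨x, y, rfl⟩ := mem_maxOrder.mp hz
      have : k • (m : ℚ × ℚ) * ((x : ℚ), (y : ℚ)) =
          (((k * m * x : ℤ) : ℚ), ((k * m * y : ℤ) : ℚ)) := by
        ext <;> simp
      rw [this, mk_mem_aIdeal_iff]
      simp

theorem mk_mem_quadOrder_iff {m : ℕ} {x y : ℤ} :
    ((x : ℚ), (y : ℚ)) ∈ quadOrder (ℚ × ℚ) m ↔ (y : ZMod m) = x := by
  rw [← aIdeal_one_eq_quadOrder, mk_mem_aIdeal_iff, Int.cast_one, one_mul]

theorem aIdeal_mul_aIdeal {m : ℕ} {s : ℤ} (hs : IsCoprime s m) (t : ℤ) :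
    aIdeal m s * aIdeal m t = aIdeal m (s * t) := by
  apply le_antisymm
  · refine mul_le.mpr fun z hz w hw ↦ ?_
    obtain ⟨x, y, rfl, hxy⟩ := mem_aIdeal.mp hz
    obtain ⟨x', y', rfl, hxy'⟩ := mem_aIdeal.mp hw
    have : ((x : ℚ), (y : ℚ)) * ((x' : ℚ), (y' : ℚ)) =
        (((x * x' : ℤ) : ℚ), ((y * y' : ℤ) : ℚ)) := by
      ext <;> simp
    rw [this, mk_mem_aIdeal_iff, Int.cast_mul, Int.cast_mul, hxy, hxy']
    push_cast
    ring
  · obtain ⟨u, v, huv⟩ := hs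
    obtain ⟨hs1, hsm⟩ := aIdeal_le_iff.mp (le_refl (aIdeal m s))
    obtain ⟨ht1, htm⟩ := aIdeal_le_iff.mp (le_refl (aIdeal m t))
    refine aIdeal_le_iff.mpr ⟨by simpa using mul_mem_mul hs1 ht1, ?_⟩
    have : ((0 : ℚ), (m : ℚ)) = u • (((1 : ℚ), (s : ℚ)) * ((0 : ℚ), (m : ℚ))) +
        v • (((0 : ℚ), (m : ℚ)) * ((0 : ℚ), (m : ℚ))) := by
      have huv' : (u : ℚ) * s + v * m = 1 := by exact_mod_cast huv
      ext
      · simp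
      · simp only [Prod.smul_mk, Prod.mk_mul_mk, Prod.snd_add, zsmul_eq_mul]
        linear_combination (-(m : ℚ)) * huv'
    rw [this]
    exact add_mem (smul_mem _ _ (mul_mem_mul hs1 htm)) (smul_mem _ _ (mul_mem_mul hsm htm))

theorem aIdeal_eq_aIdeal_iff {m : ℕ} {s t : ℤ} :
    aIdeal m s = aIdeal m t ↔ (s : ZMod m) = t := by
  constructor
  · intro h
    have := (aIdeal_le_iff.mp h.le).1
    rwa [← Int.cast_one, mk_mem_aIdeal_iff, Int.cast_one, mul_one] at this
  · intro h
    ext z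
    simp only [mem_aIdeal, h]

theorem span_units_mul_aIdeal {m : ℕ} (ε δ : ℤˣ) (t : ℤ) :
    span ℤ {(((ε : ℤ) : ℚ), ((δ : ℤ) : ℚ))} * aIdeal m t = aIdeal m (ε * δ * t) := by
  have sq : ∀ (R : Type) [Ring R] (u : ℤˣ), ((u : ℤ) : R) * u = 1 := fun R _ u ↦ by
    rw [← Int.cast_mul, Int.units_coe_mul_self, Int.cast_one]
  ext z
  rw [mem_span_singleton_mul, mem_aIdeal]
  constructor
  · rintro ⟨w, hw, rfl⟩
    obtain ⟨x, y, rfl, hxy⟩ := mem_aIdeal.mp hw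
    refine ⟨ε * x, δ * y, by ext <;> simp, ?_⟩
    push_cast
    linear_combination (δ : ZMod m) * hxy - (δ * t * x : ZMod m) * sq (ZMod m) ε
  · rintro ⟨x, y, rfl, hxy⟩
    refine ⟨(((ε * x : ℤ) : ℚ), ((δ * y : ℤ) : ℚ)), mk_mem_aIdeal_iff.mpr ?_, ?_⟩
    · push_cast at hxy ⊢
      linear_combination (δ : ZMod m) * hxy + (t * ε * x : ZMod m) * sq (ZMod m) δ
    · ext
      · simp [← mul_assoc, sq ℚ ε]
      · simp [← mul_assoc, sq ℚ δ]

def HasIntProjections (L : Submodule ℤ (ℚ × ℚ)) : Prop :=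
  L.map (AlgHom.fst ℤ ℚ ℚ).toLinearMap = 1 ∧ L.map (AlgHom.snd ℤ ℚ ℚ).toLinearMap = 1

namespace HasIntProjections

variable {L L' : Submodule ℤ (ℚ × ℚ)}

theorem exists_eq_intCast (hL : HasIntProjections L) {z : ℚ × ℚ} (hz : z ∈ L) :
    ∃ x y : ℤ, z = ((x : ℚ), (y : ℚ)) := by
  obtain ⟨x, hx⟩ := (map_eq_one_iff.mp hL.1).1 z hz
  obtain ⟨y, hy⟩ := (map_eq_one_iff.mp hL.2).1 z hz
  simp only [algebraMap_int_eq, eq_intCast, AlgHom.toLinearMap_apply, AlgHom.fst_apply,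
    AlgHom.snd_apply] at hx hy
  exact ⟨x, y, Prod.ext hx.symm hy.symm⟩

theorem exists_one_mk_mem (hL : HasIntProjections L) :
    ∃ t : ℤ, ((1 : ℚ), (t : ℚ)) ∈ L := by
  obtain ⟨z, hz, hz1⟩ := (map_eq_one_iff.mp hL.1).2
  obtain ⟨x, y, rfl⟩ := hL.exists_eq_intCast hz
  exact ⟨y, by simpa using hz1 ▸ hz⟩

theorem exists_mk_one_mem (hL : HasIntProjections L) :
    ∃ s : ℤ, ((s : ℚ), (1 : ℚ)) ∈ L := by
  obtain ⟨z, hz, hz1⟩ := (map_eq_one_iff.mp hL.2).2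
  obtain ⟨x, y, rfl⟩ := hL.exists_eq_intCast hz
  exact ⟨x, by simpa using hz1 ▸ hz⟩

theorem of_mul (hL : HasIntProjections L) (hLL' : HasIntProjections (L * L')) :
    HasIntProjections L' := by
  constructor
  · rw [← hLL'.1, Submodule.map_mul, hL.1, one_mul]
  · rw [← hLL'.2, Submodule.map_mul, hL.2, one_mul]

theorem exists_units_eq_of_span_mul (hL : HasIntProjections L) {ρ : ℚ × ℚ}
    (hρL : HasIntProjections (span ℤ {ρ} * L)) :
    ∃ ε δ : ℤˣ, ρ = (((ε : ℤ) : ℚ), ((δ : ℤ) : ℚ)) := by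
  have key : ∀ f : ℚ × ℚ →ₐ[ℤ] ℚ, L.map f.toLinearMap = 1 →
      (span ℤ {ρ} * L).map f.toLinearMap = 1 → ∃ u : ℤˣ, ((u : ℤ) : ℚ) = f ρ := by
    intro f h1 h2
    rw [map_span_singleton_mul, h1, mul_one, one_eq_span, eq_comm,
      span_singleton_eq_span_singleton] at h2
    obtain ⟨u, hu⟩ := h2
    exact ⟨u, by simpa [Units.smul_def] using hu⟩
  obtain ⟨ε, hε⟩ := key _ hL.1 hρL.1
  obtain ⟨δ, hδ⟩ := key _ hL.2 hρL.2
  exact ⟨ε, δ, Prod.ext hε.symm hδ.symm⟩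

end HasIntProjections

theorem hasIntProjections_aIdeal {m : ℕ} {t : ℤ} (ht : IsCoprime t m) :
    HasIntProjections (aIdeal m t) := by
  obtain ⟨u, v, huv⟩ := ht
  have hint : ∀ z ∈ aIdeal m t, ∃ x y : ℤ, z = ((x : ℚ), (y : ℚ)) := fun z hz ↦ by
    obtain ⟨x, y, rfl, -⟩ := mem_aIdeal.mp hz
    exact ⟨x, y, rfl⟩
  constructor <;> refine map_eq_one_iff.mpr ⟨fun z hz ↦ ?_, ?_⟩
  · obtain ⟨x, y, rfl⟩ := hint z hz
    exact ⟨x, by simp⟩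
  · exact ⟨_, (aIdeal_le_iff.mp le_rfl).1, rfl⟩
  · obtain ⟨x, y, rfl⟩ := hint z hz
    exact ⟨y, by simp⟩
  · -- `(u, 1) ∈ a_t` because `tu ≡ 1 mod m`
    refine ⟨((u : ℚ), ((1 : ℤ) : ℚ)), mk_mem_aIdeal_iff.mpr ?_, by simp⟩
    have : ((u * t + v * m : ℤ) : ZMod m) = 1 := by rw [huv, Int.cast_one]
    push_cast at this
    simpa [mul_comm] using this.symm

theorem hasIntProjections_quadOrder (m : ℕ) : HasIntProjections (quadOrder (ℚ × ℚ) m) :=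
  aIdeal_one_eq_quadOrder m ▸ hasIntProjections_aIdeal isCoprime_one_left

theorem exists_isUnit_hasIntProjections {m : ℕ} {a b : Submodule ℤ (ℚ × ℚ)}
    (hab : a * b = quadOrder (ℚ × ℚ) m) :
    ∃ ρ : ℚ × ℚ, IsUnit ρ ∧ HasIntProjections (span ℤ {ρ} * a) := by
  have key (f : ℚ × ℚ →ₐ[ℤ] ℚ) (hf : (quadOrder (ℚ × ℚ) m).map f.toLinearMap = 1) :
      ∃ α : ℚ, α ≠ 0 ∧ a.map f.toLinearMap = span ℤ {α} :=
    exists_eq_span_singleton_of_mul_eq_one (by rw [← Submodule.map_mul, hab, hf])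
  obtain ⟨α, hα, hαa⟩ := key _ (hasIntProjections_quadOrder m).1
  obtain ⟨β, hβ, hβa⟩ := key _ (hasIntProjections_quadOrder m).2
  refine ⟨(α⁻¹, β⁻¹), Prod.isUnit_iff.mpr ⟨by simpa, by simpa⟩, ?_, ?_⟩
  · rw [map_span_singleton_mul, hαa, span_mul_span, Set.singleton_mul_singleton,
      AlgHom.fst_apply, inv_mul_cancel₀ hα, ← one_eq_span]
  · rw [map_span_singleton_mul, hβa, span_mul_span, Set.singleton_mul_singleton,
      AlgHom.snd_apply, inv_mul_cancel₀ hβ, ← one_eq_span]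

theorem exists_isCoprime_eq_aIdeal {m : ℕ} {a b : Submodule ℤ (ℚ × ℚ)}
    (ha : HasIntProjections a) (hOa : quadOrder (ℚ × ℚ) m * a = a)
    (hab : a * b = quadOrder (ℚ × ℚ) m) :
    ∃ t : ℤ, IsCoprime t m ∧ a = aIdeal m t := by
  have hb : HasIntProjections b := ha.of_mul (hab ▸ hasIntProjections_quadOrder m)
  obtain ⟨t, ht⟩ := ha.exists_one_mk_mem
  obtain ⟨s, hs⟩ := ha.exists_mk_one_mem
  obtain ⟨u, hu⟩ := hb.exists_one_mk_mem
  have htu : (t : ZMod m) * u = 1 := by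
    have := hab ▸ mul_mem_mul ht hu
    rw [Prod.mk_mul_mk, one_mul, ← Int.cast_mul, ← Int.cast_one (R := ℚ),
      mk_mem_quadOrder_iff] at this
    exact_mod_cast this
  refine ⟨t, ?_, le_antisymm (fun z hz ↦ ?_) (aIdeal_le_iff.mpr ⟨ht, ?_⟩)⟩
  · obtain ⟨k, hk⟩ :=
      (ZMod.intCast_eq_intCast_iff_dvd_sub 1 (t * u) m).mp (by simpa using htu.symm)
    exact ⟨u, -k, by linear_combination hk⟩
  · -- `z (1, u) ∈ O` gives `y u ≡ x`, hence `y ≡ y t u ≡ t x`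
    obtain ⟨x, y, rfl⟩ := ha.exists_eq_intCast hz
    have := hab ▸ mul_mem_mul hz hu
    rw [Prod.mk_mul_mk, mul_one, ← Int.cast_mul, mk_mem_quadOrder_iff, Int.cast_mul] at this
    rw [mk_mem_aIdeal_iff, ← this]
    linear_combination (-(y : ZMod m)) * htu
  · have : ((0 : ℚ), (m : ℚ)) = ((0 : ℚ), (m : ℚ)) * ((s : ℚ), (1 : ℚ)) := by
      ext <;> simp
    rw [this, ← hOa]
    exact mul_mem_mul (aIdeal_one_eq_quadOrder m ▸ (aIdeal_le_iff.mp le_rfl).2) hs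

theorem exists_isCoprime_eq_span_mul_aIdeal {m : ℕ} {a : Submodule ℤ (ℚ × ℚ)}
    (ha : IsInvertibleIdeal (quadOrder (ℚ × ℚ) m) a) :
    ∃ t : ℤ, IsCoprime t m ∧
      ∃ ρ : ℚ × ℚ, IsUnit ρ ∧ a = span ℤ {ρ} * aIdeal m t := by
  obtain ⟨hOa, b, -, hab⟩ := ha
  obtain ⟨ρ, ⟨u, rfl⟩, hρa⟩ := exists_isUnit_hasIntProjections hab
  have hcancel (N : Submodule ℤ (ℚ × ℚ)) :
      span ℤ {(↑u⁻¹ : ℚ × ℚ)} * (span ℤ {(u : ℚ × ℚ)} * N) = N := by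
    rw [← mul_assoc, span_mul_span, Set.singleton_mul_singleton, Units.inv_mul, ← one_eq_span,
      one_mul]
  obtain ⟨t, ht, hat⟩ :=
    exists_isCoprime_eq_aIdeal (b := span ℤ {(↑u⁻¹ : ℚ × ℚ)} * b) hρa
    (by rw [mul_left_comm, hOa])
    (by rw [mul_mul_mul_comm, mul_comm (span ℤ _), mul_assoc, hcancel, hab])
  exact ⟨t, ht, ↑u⁻¹, Units.isUnit _, by rw [← hat, hcancel]⟩

theorem exists_isUnit_aIdeal_eq_span_mul_iff {m : ℕ} {s t : ℤ} (hs : IsCoprime s m)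
    (ht : IsCoprime t m) :
    (∃ ρ : ℚ × ℚ, IsUnit ρ ∧ aIdeal m s = span ℤ {ρ} * aIdeal m t) ↔
      (s : ZMod m) = t ∨ (s : ZMod m) = -t := by
  constructor
  · rintro ⟨ρ, -, h⟩
    obtain ⟨ε, δ, rfl⟩ := (hasIntProjections_aIdeal ht).exists_units_eq_of_span_mul
      (h ▸ hasIntProjections_aIdeal hs)
    rw [span_units_mul_aIdeal, aIdeal_eq_aIdeal_iff] at h
    rcases Int.units_eq_one_or (ε * δ) with hεδ | hεδ <;>
      simp [h, ← Units.val_mul, hεδ]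
  · have key (ε δ : ℤˣ) (h : (s : ZMod m) = (ε * δ * t : ℤ)) :
        ∃ ρ : ℚ × ℚ, IsUnit ρ ∧ aIdeal m s = span ℤ {ρ} * aIdeal m t :=
      ⟨_, Prod.isUnit_iff.mpr ⟨ε.isUnit.map (Int.castRingHom ℚ),
        δ.isUnit.map (Int.castRingHom ℚ)⟩,
        by rw [span_units_mul_aIdeal, aIdeal_eq_aIdeal_iff, h]⟩
    rintro (h | h)
    · exact key 1 1 (by simpa using h)
    · exact key 1 (-1) (by simpa using h)

end SplitQuadraticOrder

theorem classGroup_split_quadratic_order_general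
    (m : ℕ) :
    aIdeal m 1 = quadOrder (ℚ × ℚ) m ∧
    (∀ s t : ℤ, IsCoprime s (m : ℤ) → IsCoprime t (m : ℤ) →
      aIdeal m s * aIdeal m t = aIdeal m (s * t)) ∧
    (∀ a : Submodule ℤ (ℚ × ℚ), IsInvertibleIdeal (quadOrder (ℚ × ℚ) m) a →
      ∃ t : ℤ, IsCoprime t (m : ℤ) ∧
        ∃ ρ : ℚ × ℚ, IsUnit ρ ∧ a = Submodule.span ℤ {ρ} * aIdeal m t) ∧
    (∀ s t : ℤ, IsCoprime s (m : ℤ) → IsCoprime t (m : ℤ) →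
      ((∃ ρ : ℚ × ℚ, IsUnit ρ ∧ aIdeal m s = Submodule.span ℤ {ρ} * aIdeal m t)
        ↔ ((s : ZMod m) = (t : ZMod m) ∨ (s : ZMod m) = -(t : ZMod m)))) :=
  ⟨SplitQuadraticOrder.aIdeal_one_eq_quadOrder m,
    fun _ t hs _ ↦ SplitQuadraticOrder.aIdeal_mul_aIdeal hs t,
    fun _ ha ↦ SplitQuadraticOrder.exists_isCoprime_eq_span_mul_aIdeal ha,
    fun _ _ hs ht ↦ SplitQuadraticOrder.exists_isUnit_aIdeal_eq_span_mul_iff hs ht⟩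

/-- The ideal class group of the order `O_{ℚ²,m} = ℤ·(1,1) + m·(ℤ × ℤ)` in
`ℚ × ℚ` is isomorphic to `(ℤ/mℤ)* / {±1}` via the class of
`a_t = ℤ·(1,t) + ℤ·(0,m)` (for `t` prime to `m`) ↦ `±t mod m`.  Unfolded:
`a_1 = O_{ℚ²,m}`; `a_s·a_t = a_{st}`; every invertible fractional
`O_{ℚ²,m}`-ideal is equivalent to some `a_t` with `gcd(t,m) = 1`
(surjectivity); and `a_s`, `a_t` are in the same class iff `s ≡ ±t mod m`
(well-definedness and injectivity). -/
theorem classGroup_split_quadratic_order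
    (m : ℕ) (hm : 0 < m) :
    aIdeal m 1 = quadOrder (ℚ × ℚ) m ∧
    (∀ s t : ℤ, IsCoprime s (m : ℤ) → IsCoprime t (m : ℤ) →
      aIdeal m s * aIdeal m t = aIdeal m (s * t)) ∧
    (∀ a : Submodule ℤ (ℚ × ℚ), IsInvertibleIdeal (quadOrder (ℚ × ℚ) m) a →
      ∃ t : ℤ, IsCoprime t (m : ℤ) ∧
        ∃ ρ : ℚ × ℚ, IsUnit ρ ∧ a = Submodule.span ℤ {ρ} * aIdeal m t) ∧
    (∀ s t : ℤ, IsCoprime s (m : ℤ) → IsCoprime t (m : ℤ) →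
      ((∃ ρ : ℚ × ℚ, IsUnit ρ ∧ aIdeal m s = Submodule.span ℤ {ρ} * aIdeal m t)
        ↔ ((s : ZMod m) = (t : ZMod m) ∨ (s : ZMod m) = -(t : ZMod m)))) :=
  classGroup_split_quadratic_order_general m
end

section
/- Lemma A.1: Let k be a number field, 𝔪 = 𝔪₀𝔪_∞ a modulus, A = k^{n+1}, and O_{A,𝔪} = O_k·1 + 𝔪₀·O_A. If ã and b̃ are integral O_{A,𝔪}-ideals prime to 𝔪₀O_A, and γ = (γ₀,…,γ_n) ∈ A* is equivariant modulo 𝔪_∞ (i.e., σ(γᵢ/γ₀) > 0 for all 1 ≤ i ≤ n and σ ∈ 𝔪_∞) with b̃ = γ·ã, then γᵢ/γ₀ ≡ 1 (mod* 𝔪) for all 1 ≤ i ≤ n. -/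
open NumberField

/-!
Being prime to `𝔪₀O_A`, `J` contains a constant vector `(C,…,C)` with `C ≡ 1 mod 𝔪₀`: write
`1 = x + y` with `x ∈ J`, `y ∈ 𝔪₀O_A`, and multiply `x` by `(∏_{l ≠ j} x_l)_j ∈ O_{A,𝔪}`.
Then `v = γC ∈ J'` lies in `O_{A,𝔪}`, so `β = v_i` and `δ = v_0` are integers with
`β ≡ δ mod 𝔪₀` and `β/δ = γ_i/γ_0`.  Finally `δ` is prime to `𝔪₀`: a constant vector
`(D,…,D) ∈ J'` with `D ≡ 1` is `γu` for some `u ∈ J`, so `δ u_0 = CD ≡ 1 mod 𝔪₀`.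
-/

namespace EquivariantScaling

lemma span_singleton_sup_eq_top_of_mul_eq {R : Type*} [CommRing R] {I : Ideal R} {δ u e : R}
    (he : Ideal.Quotient.mk I e = 1) (hδu : δ * u = e) : Ideal.span {δ} ⊔ I = ⊤ := by
  have h1e : 1 - e ∈ I := Ideal.Quotient.eq.mp (by rw [map_one, he])
  rw [Ideal.eq_top_iff_one, Submodule.mem_sup]
  exact ⟨e, hδu ▸ Ideal.mem_span_singleton.mpr (dvd_mul_right δ u), 1 - e, h1e, by ring⟩

variable {k : Type*} [Field k] (m0 : Ideal (𝓞 k)) (n : ℕ)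

/-- The order `O_{A,𝔪}` of `A = k^{n+1}`. -/
def modulusOrder : Set (Fin (n + 1) → k) :=
  {r | (∀ i, IsIntegral ℤ (r i)) ∧ ∀ i, ∃ w ∈ m0, algebraMap (𝓞 k) k w = r i - r 0}

/-- The ideal `𝔪₀O_A` of `O_A = (𝓞 k)^{n+1}`. -/
def extendedModulus : Set (Fin (n + 1) → k) :=
  {y | ∀ i, ∃ w ∈ m0, algebraMap (𝓞 k) k w = y i}

/-- The finite part of `α ≡ 1 (mod* 𝔪)`. -/
def IsMulCongrOne (α : k) : Prop :=
  ∃ β δ : 𝓞 k, Ideal.span {δ} ⊔ m0 = ⊤ ∧ β - δ ∈ m0 ∧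
    algebraMap (𝓞 k) k β / algebraMap (𝓞 k) k δ = α

variable {m0 n}

lemma isMulCongrOne_top [NumberField k] (α : k) : IsMulCongrOne ⊤ α := by
  obtain ⟨β, δ, -, hβδ⟩ := IsFractionRing.div_surjective (A := 𝓞 k) α
  exact ⟨β, δ, top_unique le_sup_right, Submodule.mem_top, hβδ⟩

lemma algebraMap_mem_modulusOrder {r : Fin (n + 1) → 𝓞 k}
    (hr : ∀ i, Ideal.Quotient.mk m0 (r i) = Ideal.Quotient.mk m0 (r 0)) :
    (fun i => algebraMap (𝓞 k) k (r i)) ∈ modulusOrder m0 n :=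
  ⟨fun _ => RingOfIntegers.isIntegral_coe _,
    fun i => ⟨r i - r 0, Ideal.Quotient.eq.mp (hr i), map_sub _ _ _⟩⟩

lemma exists_const_mem_of_subset_add {J : Set (Fin (n + 1) → k)}
    (hJsmul : ∀ r ∈ modulusOrder m0 n, ∀ x ∈ J, r * x ∈ J)
    (hJprime : ∀ z ∈ modulusOrder m0 n, ∃ x ∈ J, ∃ y ∈ extendedModulus m0 n, z = x + y) :
    ∃ C : 𝓞 k, Ideal.Quotient.mk m0 C = 1 ∧ (fun _ => algebraMap (𝓞 k) k C) ∈ J := by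
  obtain ⟨x, hxJ, y, hy, hxy⟩ := hJprime 1 (algebraMap_mem_modulusOrder (r := 1) fun _ => rfl)
  choose w hw hwy using hy
  set X : Fin (n + 1) → 𝓞 k := fun l => 1 - w l
  have hX : ∀ l, Ideal.Quotient.mk m0 (X l) = 1 := fun l => by
    simp [X, Ideal.Quotient.eq_zero_iff_mem.mpr (hw l)]
  have hXx : ∀ l, algebraMap (𝓞 k) k (X l) = x l := fun l => by
    have hl := congrFun hxy l
    simp only [Pi.one_apply, Pi.add_apply] at hl
    simp only [X, map_sub, map_one, hwy]
    linear_combination hl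
  set r : Fin (n + 1) → 𝓞 k := fun j => ∏ l ∈ Finset.univ.erase j, X l
  have hr : ∀ j, Ideal.Quotient.mk m0 (r j) = 1 := fun j => by simp [r, map_prod, hX]
  refine ⟨∏ l, X l, by simp [map_prod, hX], ?_⟩
  convert hJsmul _ (algebraMap_mem_modulusOrder fun j => (hr j).trans (hr 0).symm) x hxJ
    using 1
  funext j
  rw [Pi.mul_apply, ← hXx j, ← map_mul, ← Finset.prod_erase_mul _ _ (Finset.mem_univ j)]

lemma isMulCongrOne_div_of_mem {v : Fin (n + 1) → k} (hv : v ∈ modulusOrder m0 n)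
    {u e : 𝓞 k} (he : Ideal.Quotient.mk m0 e = 1)
    (hvu : v 0 * algebraMap (𝓞 k) k u = algebraMap (𝓞 k) k e) (i : Fin (n + 1)) :
    IsMulCongrOne m0 (v i / v 0) := by
  obtain ⟨hint, hcong⟩ := hv
  obtain ⟨w, hw, hwv⟩ := hcong i
  refine ⟨⟨v i, hint i⟩, ⟨v 0, hint 0⟩,
    span_singleton_sup_eq_top_of_mul_eq he (RingOfIntegers.ext hvu), ?_, rfl⟩
  convert hw
  exact RingOfIntegers.ext hwv.symm

end EquivariantScaling

open EquivariantScaling in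
theorem equivariant_scaling_congruence_general
    (k : Type*) [Field k] [NumberField k] (n : ℕ)
    (m0 : Ideal (𝓞 k))
    (minf : Set (k →+* ℝ))
    (J J' : Set (Fin (n + 1) → k))
    -- `J` is an integral ideal of `O_{A,𝔪}`:
    (hJint : ∀ x ∈ J, (∀ i, IsIntegral ℤ (x i)) ∧
      ∀ i, ∃ w ∈ m0, algebraMap (𝓞 k) k w = x i - x 0)
    (hJsmul : ∀ r : Fin (n + 1) → k,
      ((∀ i, IsIntegral ℤ (r i)) ∧
        ∀ i, ∃ w ∈ m0, algebraMap (𝓞 k) k w = r i - r 0) →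
      ∀ x ∈ J, r * x ∈ J)
    -- `J` is prime to `𝔪₀ O_A`:
    (hJprime : ∀ z : Fin (n + 1) → k,
      ((∀ i, IsIntegral ℤ (z i)) ∧
        ∀ i, ∃ w ∈ m0, algebraMap (𝓞 k) k w = z i - z 0) →
      ∃ x ∈ J, ∃ y : Fin (n + 1) → k,
        (∀ i, ∃ w ∈ m0, algebraMap (𝓞 k) k w = y i) ∧ z = x + y)
    -- same for `J'`:
    (hJ'int : ∀ x ∈ J', (∀ i, IsIntegral ℤ (x i)) ∧
      ∀ i, ∃ w ∈ m0, algebraMap (𝓞 k) k w = x i - x 0)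
    (hJ'smul : ∀ r : Fin (n + 1) → k,
      ((∀ i, IsIntegral ℤ (r i)) ∧
        ∀ i, ∃ w ∈ m0, algebraMap (𝓞 k) k w = r i - r 0) →
      ∀ x ∈ J', r * x ∈ J')
    (hJ'prime : ∀ z : Fin (n + 1) → k,
      ((∀ i, IsIntegral ℤ (z i)) ∧
        ∀ i, ∃ w ∈ m0, algebraMap (𝓞 k) k w = z i - z 0) →
      ∃ x ∈ J', ∃ y : Fin (n + 1) → k,
        (∀ i, ∃ w ∈ m0, algebraMap (𝓞 k) k w = y i) ∧ z = x + y)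
    -- `γ ∈ A*`, equivariant modulo `𝔪_∞`, with `J' = γ·J`:
    (γ : Fin (n + 1) → k)
    (hγequiv : ∀ i, ∀ σ ∈ minf, 0 < σ (γ i / γ 0))
    (hscale : J' = (fun x => γ * x) '' J) :
    ∀ i, (∃ β δ : 𝓞 k, (Ideal.span {δ} ⊔ m0 = ⊤) ∧ β - δ ∈ m0 ∧
        algebraMap (𝓞 k) k β / algebraMap (𝓞 k) k δ = γ i / γ 0) ∧
      ∀ σ ∈ minf, 0 < σ (γ i / γ 0) := by
  intro i
  refine ⟨?_, hγequiv i⟩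
  rcases eq_or_ne m0 ⊤ with rfl | hm0
  · exact isMulCongrOne_top _
  obtain ⟨C, hC, hCJ⟩ := exists_const_mem_of_subset_add hJsmul hJprime
  obtain ⟨D, hD, hDJ'⟩ := exists_const_mem_of_subset_add hJ'smul hJ'prime
  rw [hscale] at hDJ'
  obtain ⟨u, huJ, hγu⟩ := hDJ'
  have hγu₀ : γ 0 * u 0 = algebraMap (𝓞 k) k D := congrFun hγu 0
  obtain ⟨u₀, hu₀⟩ : ∃ u₀ : 𝓞 k, algebraMap (𝓞 k) k u₀ = u 0 := ⟨⟨u 0, (hJint u huJ).1 0⟩, rfl⟩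
  have hγC : γ * (fun _ => algebraMap (𝓞 k) k C) ∈ J' := hscale ▸ ⟨_, hCJ, rfl⟩
  -- `C ≡ 1` forces `C ≠ 0` only for a proper `𝔪₀`, hence the case split above.
  have := Ideal.Quotient.nontrivial_iff.mpr hm0
  have hC0 : algebraMap (𝓞 k) k C ≠ 0 := by
    rw [Ne, FaithfulSMul.algebraMap_eq_zero_iff]
    rintro rfl
    simp at hC
  have key := isMulCongrOne_div_of_mem (hJ'int _ hγC) (e := C * D)
    (by rw [map_mul, hC, hD, one_mul])
    (by rw [hu₀, map_mul, ← hγu₀, Pi.mul_apply]; ring) i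
  rwa [Pi.mul_apply, Pi.mul_apply, mul_div_mul_right _ _ hC0] at key

/-- Lemma A.1: let `k` be a number field, `𝔪 = 𝔪₀𝔪_∞` a modulus
(`𝔪₀` a nonzero integral ideal, `𝔪_∞` a set of real embeddings),
`A = k^{n+1}`, and `O_{A,𝔪} = O_k·1 + 𝔪₀·O_A`, i.e.
`{α ∈ O_A : αᵢ ≡ α₀ mod 𝔪₀ for all i}`.  If `J` and `J'` are integral
`O_{A,𝔪}`-ideals prime to `𝔪₀O_A`, and `γ = (γ₀,…,γ_n) ∈ A*` is
equivariant modulo `𝔪_∞` (i.e. `σ(γᵢ/γ₀) > 0` for all `i` and `σ ∈ 𝔪_∞`)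
with `J' = γ·J`, then `γᵢ/γ₀ ≡ 1 (mod* 𝔪)` for all `i`; here
`α ≡ 1 (mod* 𝔪)` is expressed as: `α = β/δ` with `β, δ ∈ O_k`, `δ` prime to
`𝔪₀`, `β − δ ∈ 𝔪₀`, and `σ(α) > 0` for all `σ ∈ 𝔪_∞`. -/
theorem equivariant_scaling_congruence
    (k : Type*) [Field k] [NumberField k] (n : ℕ)
    (m0 : Ideal (𝓞 k)) (hm0 : m0 ≠ ⊥)
    (minf : Set (k →+* ℝ))
    (J J' : Set (Fin (n + 1) → k))
    -- `J` is an integral ideal of `O_{A,𝔪}`: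
    (hJint : ∀ x ∈ J, (∀ i, IsIntegral ℤ (x i)) ∧
      ∀ i, ∃ w ∈ m0, algebraMap (𝓞 k) k w = x i - x 0)
    (hJadd : ∀ x ∈ J, ∀ y ∈ J, x + y ∈ J)
    (hJsmul : ∀ r : Fin (n + 1) → k,
      ((∀ i, IsIntegral ℤ (r i)) ∧
        ∀ i, ∃ w ∈ m0, algebraMap (𝓞 k) k w = r i - r 0) →
      ∀ x ∈ J, r * x ∈ J)
    -- `J` is prime to `𝔪₀ O_A`:
    (hJprime : ∀ z : Fin (n + 1) → k,
      ((∀ i, IsIntegral ℤ (z i)) ∧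
        ∀ i, ∃ w ∈ m0, algebraMap (𝓞 k) k w = z i - z 0) →
      ∃ x ∈ J, ∃ y : Fin (n + 1) → k,
        (∀ i, ∃ w ∈ m0, algebraMap (𝓞 k) k w = y i) ∧ z = x + y)
    -- same for `J'`:
    (hJ'int : ∀ x ∈ J', (∀ i, IsIntegral ℤ (x i)) ∧
      ∀ i, ∃ w ∈ m0, algebraMap (𝓞 k) k w = x i - x 0)
    (hJ'add : ∀ x ∈ J', ∀ y ∈ J', x + y ∈ J')
    (hJ'smul : ∀ r : Fin (n + 1) → k,
      ((∀ i, IsIntegral ℤ (r i)) ∧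
        ∀ i, ∃ w ∈ m0, algebraMap (𝓞 k) k w = r i - r 0) →
      ∀ x ∈ J', r * x ∈ J')
    (hJ'prime : ∀ z : Fin (n + 1) → k,
      ((∀ i, IsIntegral ℤ (z i)) ∧
        ∀ i, ∃ w ∈ m0, algebraMap (𝓞 k) k w = z i - z 0) →
      ∃ x ∈ J', ∃ y : Fin (n + 1) → k,
        (∀ i, ∃ w ∈ m0, algebraMap (𝓞 k) k w = y i) ∧ z = x + y)
    -- `γ ∈ A*`, equivariant modulo `𝔪_∞`, with `J' = γ·J`:
    (γ : Fin (n + 1) → k) (hγunit : ∀ i, γ i ≠ 0)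
    (hγequiv : ∀ i, ∀ σ ∈ minf, 0 < σ (γ i / γ 0))
    (hscale : J' = (fun x => γ * x) '' J) :
    ∀ i, (∃ β δ : 𝓞 k, (Ideal.span {δ} ⊔ m0 = ⊤) ∧ β - δ ∈ m0 ∧
        algebraMap (𝓞 k) k β / algebraMap (𝓞 k) k δ = γ i / γ 0) ∧
      ∀ σ ∈ minf, 0 < σ (γ i / γ 0) :=
  equivariant_scaling_congruence_general k n m0 minf J J' hJint hJsmul hJprime hJ'int hJ'smul
    hJ'prime γ hγequiv hscale
end

section
/- Compatible inverse system conductor: let (I, ≺) be a partially ordered set in which each element has finitely many predecessors, and let ((A_i), (φ_{ij})) be a compatible inverse system of finite abelian groups with surjective transition maps satisfying φ_{ii} = id, φ_{im} = φ_{ij}∘φ_{jm}, and for i ≺ m, j ≺ m there exists l ≺ i, l ≺ j with Ker φ_{im} · Ker φ_{jm} = Ker φ_{lm}. Then every subgroup H of A_j is induced by a unique subgroup H₁ of A_f for a unique minimal index f (the conductor of H), i.e., H = φ_{fj}⁻¹(H₁), and H₁ is not induced by any subgroup of any A_{i} with i ≺ f, i ≠ f. -/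
/-!
`H` is induced from `A i` exactly when `Ker φ i j ≤ H`. By the kernel axiom, if `H` is induced
from `i` and from `i'` then it is induced from the index `l ≤ i, i'` with
`Ker φ l j = Ker φ i j ⊔ Ker φ i' j`, so the inducing indices are downward directed. They form a
finite set containing `j`, so a minimal one is least: this is the conductor. Surjectivity of
`φ f j` makes the inducing subgroup of `A f` unique.
-/

namespace Subgroup

variable {G N : Type*} [Group G] [Group N]

theorem exists_eq_comap_iff_ker_le (f : G →* N) (H : Subgroup G) :
    (∃ K : Subgroup N, H = K.comap f) ↔ f.ker ≤ H :=
  ⟨by rintro ⟨K, rfl⟩; exact ker_le_comap f K,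
    fun h => ⟨H.map f, (comap_map_eq_self h).symm⟩⟩

theorem existsUnique_eq_comap_of_ker_le {f : G →* N} (hf : Function.Surjective f)
    {H : Subgroup G} (h : f.ker ≤ H) : ∃! K : Subgroup N, H = K.comap f :=
  ⟨H.map f, (comap_map_eq_self h).symm,
    fun _ hK => comap_injective hf (hK.symm.trans (comap_map_eq_self h).symm)⟩

end Subgroup

theorem Set.Finite.exists_isLeast_of_directedOn {α : Type*} [Preorder α] {s : Set α}
    (hs : s.Finite) (hne : s.Nonempty) (hd : DirectedOn (· ≥ ·) s) : ∃ a, IsLeast s a :=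
  (hs.exists_minimal hne).imp fun _ => hd.minimal_iff_isLeast.1

section InverseSystem

variable {I : Type*} [PartialOrder I] {A : I → Type*} [∀ i, Group (A i)]
  (φ : ∀ i j : I, i ≤ j → (A j →* A i))

def inducingIndices (j : I) (H : Subgroup (A j)) : Set I :=
  {i | ∃ hi : i ≤ j, (φ i j hi).ker ≤ H}

variable {φ}

theorem mem_inducingIndices_iff {i j : I} (hi : i ≤ j) (H : Subgroup (A j)) :
    i ∈ inducingIndices φ j H ↔ ∃ K : Subgroup (A i), H = K.comap (φ i j hi) :=
  ⟨fun ⟨_, h⟩ => (Subgroup.exists_eq_comap_iff_ker_le _ H).2 h,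
    fun h => ⟨hi, (Subgroup.exists_eq_comap_iff_ker_le _ H).1 h⟩⟩

theorem self_mem_inducingIndices (hid : ∀ i, φ i i le_rfl = MonoidHom.id (A i)) {j : I}
    (H : Subgroup (A j)) : j ∈ inducingIndices φ j H :=
  ⟨le_rfl, by simp only [hid, MonoidHom.ker_id, bot_le]⟩

theorem directedOn_inducingIndices
    (hker : ∀ i j m (hi : i ≤ m) (hj : j ≤ m),
      ∃ l, ∃ hli : l ≤ i, ∃ _ : l ≤ j,
        (φ i m hi).ker ⊔ (φ j m hj).ker = (φ l m (hli.trans hi)).ker)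
    {j : I} (H : Subgroup (A j)) : DirectedOn (· ≥ ·) (inducingIndices φ j H) := by
  rintro i ⟨hij, hiH⟩ i' ⟨hi'j, hi'H⟩
  obtain ⟨l, hli, hli', hl⟩ := hker i i' j hij hi'j
  exact ⟨l, ⟨hli.trans hij, hl ▸ sup_le hiH hi'H⟩, hli, hli'⟩

end InverseSystem

theorem conductor_of_compatible_inverse_system_general
    {I : Type*} [PartialOrder I]
    (hfin : ∀ j : I, {i : I | i ≤ j}.Finite)
    (A : I → Type*) [∀ i, CommGroup (A i)]
    (φ : ∀ i j : I, i ≤ j → (A j →* A i))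
    (hsurj : ∀ i j (h : i ≤ j), Function.Surjective (φ i j h))
    (hid : ∀ i, φ i i le_rfl = MonoidHom.id (A i))
    (hker : ∀ i j m (hi : i ≤ m) (hj : j ≤ m),
      ∃ l, ∃ hli : l ≤ i, ∃ hlj : l ≤ j,
        (φ i m hi).ker ⊔ (φ j m hj).ker = (φ l m (hli.trans hi)).ker)
    (j : I) (H : Subgroup (A j)) :
    ∃! f : I, ∃ hf : f ≤ j,
      (∃! H₁ : Subgroup (A f), H = H₁.comap (φ f j hf)) ∧
      ∀ i (hi : i ≤ j), (∃ H₂ : Subgroup (A i), H = H₂.comap (φ i j hi)) →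
        f ≤ i := by
  obtain ⟨f, ⟨hfj, hfH⟩, hleast⟩ :=
    ((hfin j).subset fun _ hi => hi.1).exists_isLeast_of_directedOn
      ⟨j, self_mem_inducingIndices hid H⟩ (directedOn_inducingIndices hker H)
  refine ⟨f, ⟨hfj, Subgroup.existsUnique_eq_comap_of_ker_le (hsurj f j hfj) hfH,
    fun i hi hH => hleast ((mem_inducingIndices_iff hi H).2 hH)⟩, ?_⟩
  rintro g ⟨hgj, hgH, hgleast⟩
  exact le_antisymm (hgleast f hfj ((mem_inducingIndices_iff hfj H).1 ⟨hfj, hfH⟩))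
    (hleast ((mem_inducingIndices_iff hgj H).2 hgH.exists))

/-- Compatible inverse system conductor: let `(I, ≤)` be a partially ordered
set in which each element has finitely many predecessors, and let
`((A i), (φ i j))` be a compatible inverse system of finite abelian groups
with surjective transition maps satisfying `φ i i = id`,
`φ i m = φ i j ∘ φ j m`, and the kernel compatibility axiom: for `i ≤ m`,
`j ≤ m` there is `l ≤ i`, `l ≤ j` with `Ker φ i m · Ker φ j m = Ker φ l m`.
Then every subgroup `H` of `A j` is induced from a unique subgroup `H₁` of
`A f` for a unique minimal index `f ≤ j` (the conductor of `H`):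
`H = (φ f j)⁻¹(H₁)`, and any index `i ≤ j` from which `H` is induced
satisfies `f ≤ i` (so `H₁` is not induced from any `A i` with `i < f`). -/
theorem conductor_of_compatible_inverse_system
    {I : Type*} [PartialOrder I]
    (hfin : ∀ j : I, {i : I | i ≤ j}.Finite)
    (A : I → Type*) [∀ i, CommGroup (A i)] [∀ i, Finite (A i)]
    (φ : ∀ i j : I, i ≤ j → (A j →* A i))
    (hsurj : ∀ i j (h : i ≤ j), Function.Surjective (φ i j h))
    (hid : ∀ i, φ i i le_rfl = MonoidHom.id (A i))
    (hcomp : ∀ i j m (hij : i ≤ j) (hjm : j ≤ m),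
      φ i m (hij.trans hjm) = (φ i j hij).comp (φ j m hjm))
    (hker : ∀ i j m (hi : i ≤ m) (hj : j ≤ m),
      ∃ l, ∃ hli : l ≤ i, ∃ hlj : l ≤ j,
        (φ i m hi).ker ⊔ (φ j m hj).ker = (φ l m (hli.trans hi)).ker)
    (j : I) (H : Subgroup (A j)) :
    ∃! f : I, ∃ hf : f ≤ j,
      (∃! H₁ : Subgroup (A f), H = H₁.comap (φ f j hf)) ∧
      ∀ i (hi : i ≤ j), (∃ H₂ : Subgroup (A i), H = H₂.comap (φ i j hi)) →
        f ≤ i :=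
  conductor_of_compatible_inverse_system_general hfin A φ hsurj hid hker j H
end
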